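/- arXiv:2201.11968 — 10 statements merged into one kernel-verified Lean document; each statement's English description precedes it below -/
import Mathlib

section
/- Fix n ≥ 1, input dimension a and hidden dimension b, data points x_1,…,x_n ∈ ℝ^a and labels y_1,…,y_n ∈ ℝ, and a differentiable loss ℓ : ℝ → ℝ. Consider the two-layer linear network ν(W, c)(x) = ⟨c, W x⟩ with W ∈ Mat_{b×a}(ℝ) and c ∈ ℝ^b, and the empirical risk R(W, c) = (1/n) Σ_{i=1}^n ℓ(y_i · ⟨c, W x_i⟩). Let W : ℝ → Mat_{b×a}(ℝ) and c : ℝ → ℝ^b be curves satisfying, for every t, W′(t) = −(1/n) Σ_{i=1}^n ℓ′(y_i ⟨c(t), W(t)x_i⟩) · y_i · (c(t) x_iᵀ) and c′(t) = −(1/n) Σ_{i=1}^n ℓ′(y_i ⟨c(t), W(t)x_i⟩) · y_i · (W(t) x_i) (gradient flow on R). Then for every t, c(t) c(t)ᵀ − W(t) W(t)ᵀ = c(0) c(0)ᵀ − W(0) W(0)ᵀ. -/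
open Matrix

/-- **Gram invariance for a two-layer linear network under gradient flow.**
For the network `ν(W,c)(x) = ⟨c, W x⟩` and empirical risk
`R(W,c) = (1/n) ∑ᵢ ℓ(yᵢ ⟨c, W xᵢ⟩)`, gradient flow conserves `c cᵀ - W Wᵀ`. -/
theorem two_layer_gram_invariance
    (n a b : ℕ) (hn : 1 ≤ n)
    (x : Fin n → Fin a → ℝ) (y : Fin n → ℝ)
    (ℓ : ℝ → ℝ) (hℓ : Differentiable ℝ ℓ)
    (W : ℝ → Matrix (Fin b) (Fin a) ℝ) (c : ℝ → Fin b → ℝ)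
    (hW : ∀ (t : ℝ) (j : Fin b) (k : Fin a),
      HasDerivAt (fun s => W s j k)
        (-(1 / (n : ℝ)) * ∑ i : Fin n,
          deriv ℓ (y i * (c t ⬝ᵥ (W t).mulVec (x i))) * y i * (c t j * x i k)) t)
    (hc : ∀ (t : ℝ) (j : Fin b),
      HasDerivAt (fun s => c s j)
        (-(1 / (n : ℝ)) * ∑ i : Fin n,
          deriv ℓ (y i * (c t ⬝ᵥ (W t).mulVec (x i))) * y i * ((W t).mulVec (x i) j)) t) :
    ∀ t : ℝ,
      vecMulVec (c t) (c t) - W t * (W t)ᵀ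
        = vecMulVec (c 0) (c 0) - W 0 * (W 0)ᵀ := by
  intro t
  ext j k
  simp only [Matrix.sub_apply, Matrix.vecMulVec_apply, Matrix.mul_apply,
    Matrix.transpose_apply]
  have key : ∀ s : ℝ,
      HasDerivAt (fun u => c u j * c u k - ∑ m, W u j m * W u k m) 0 s := by
    intro s
    have h1 := (hc s j).fun_mul (hc s k)
    have h2 : HasDerivAt (fun u => ∑ m, W u j m * W u k m)
        (∑ m, ((-(1 / (n : ℝ)) * ∑ i : Fin n,
            deriv ℓ (y i * (c s ⬝ᵥ (W s).mulVec (x i))) * y i * (c s j * x i m)) * W s k m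
          + W s j m * (-(1 / (n : ℝ)) * ∑ i : Fin n,
            deriv ℓ (y i * (c s ⬝ᵥ (W s).mulVec (x i))) * y i * (c s k * x i m)))) s :=
      HasDerivAt.fun_sum fun m _ => (hW s j m).mul (hW s k m)
    have h := h1.fun_sub h2
    convert h using 1
    · rfl
    · rfl
    set g : Fin n → ℝ := fun i => deriv ℓ (y i * (c s ⬝ᵥ (W s).mulVec (x i))) * y i with hg
    simp only [Matrix.mulVec, dotProduct, Finset.mul_sum, Finset.sum_mul, mul_add,
      add_mul, Finset.sum_add_distrib, neg_mul, Finset.sum_neg_distrib, mul_comm, mul_left_comm,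
      mul_assoc]
    rw [Finset.sum_comm (γ := Fin a) (α := Fin n)]
    rw [Finset.sum_comm (γ := Fin a) (α := Fin n)]
    ring
  have := is_const_of_deriv_eq_zero
    (f := fun u => c u j * c u k - ∑ m, W u j m * W u k m)
    (fun s => (key s).differentiableAt) (fun s => (key s).deriv) t 0
  linarith [this]
end

section
/- Let a, b, c be natural numbers and let W₁ : ℝ → Mat_{b×a}(ℝ), W₂ : ℝ → Mat_{c×b}(ℝ), C : ℝ → Mat_{c×a}(ℝ) be matrix-valued curves such that for every t ∈ ℝ, W₁ has derivative −(W₂(t))ᵀ · C(t) at t and W₂ has derivative −C(t) · (W₁(t))ᵀ at t. Then for every t ∈ ℝ, ‖W₂(t)‖_F² − ‖W₁(t)‖_F² = ‖W₂(0)‖_F² − ‖W₁(0)‖_F²; that is, the difference of squared Frobenius norms of adjacent layers is invariant under gradient flow. -/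
open Matrix

/-- **Frobenius-norm invariance for adjacent linear layers under gradient flow.**
If `W₁' = -(W₂)ᵀ C` and `W₂' = -C W₁ᵀ` (entrywise derivatives), then
`‖W₂‖_F² - ‖W₁‖_F²` (written as sums of squared entries) is constant in time. -/
theorem frobenius_difference_invariant
    (a b c : ℕ)
    (W₁ : ℝ → Matrix (Fin b) (Fin a) ℝ)
    (W₂ : ℝ → Matrix (Fin c) (Fin b) ℝ)
    (C : ℝ → Matrix (Fin c) (Fin a) ℝ)
    (h₁ : ∀ (t : ℝ) (i : Fin b) (j : Fin a),
      HasDerivAt (fun s => W₁ s i j) ((-((W₂ t)ᵀ * C t)) i j) t)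
    (h₂ : ∀ (t : ℝ) (i : Fin c) (j : Fin b),
      HasDerivAt (fun s => W₂ s i j) ((-(C t * (W₁ t)ᵀ)) i j) t) :
    ∀ t : ℝ,
      (∑ i : Fin c, ∑ j : Fin b, (W₂ t i j) ^ 2)
        - (∑ i : Fin b, ∑ j : Fin a, (W₁ t i j) ^ 2)
      = (∑ i : Fin c, ∑ j : Fin b, (W₂ 0 i j) ^ 2)
        - (∑ i : Fin b, ∑ j : Fin a, (W₁ 0 i j) ^ 2) := by
  intro t
  set f : ℝ → ℝ := fun s =>
    (∑ i : Fin c, ∑ j : Fin b, (W₂ s i j) ^ 2)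
      - (∑ i : Fin b, ∑ j : Fin a, (W₁ s i j) ^ 2) with hf
  have key : ∀ s : ℝ, HasDerivAt f 0 s := by
    intro s
    have hd2 : HasDerivAt (fun u => ∑ i : Fin c, ∑ j : Fin b, (W₂ u i j) ^ 2)
        (∑ i : Fin c, ∑ j : Fin b, 2 * W₂ s i j * ((-(C s * (W₁ s)ᵀ)) i j)) s := by
      apply HasDerivAt.fun_sum
      intro i _
      apply HasDerivAt.fun_sum
      intro j _
      have := ((h₂ s i j).fun_pow 2)
      simpa [mul_comm, mul_assoc, mul_left_comm] using this
    have hd1 : HasDerivAt (fun u => ∑ i : Fin b, ∑ j : Fin a, (W₁ u i j) ^ 2)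
        (∑ i : Fin b, ∑ j : Fin a, 2 * W₁ s i j * ((-((W₂ s)ᵀ * C s)) i j)) s := by
      apply HasDerivAt.fun_sum
      intro i _
      apply HasDerivAt.fun_sum
      intro j _
      have := ((h₁ s i j).fun_pow 2)
      simpa [mul_comm, mul_assoc, mul_left_comm] using this
    have heq : (∑ i : Fin c, ∑ j : Fin b, 2 * W₂ s i j * ((-(C s * (W₁ s)ᵀ)) i j))
        = (∑ i : Fin b, ∑ j : Fin a, 2 * W₁ s i j * ((-((W₂ s)ᵀ * C s)) i j)) := by
      simp only [Matrix.neg_apply, Matrix.mul_apply, Matrix.transpose_apply,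
        Finset.mul_sum, mul_neg, Finset.sum_neg_distrib]
      congr 1
      rw [Finset.sum_comm]
      refine Finset.sum_congr rfl fun j _ => ?_
      rw [Finset.sum_comm]
      refine Finset.sum_congr rfl fun k _ => ?_
      refine Finset.sum_congr rfl fun i _ => ?_
      ring
    have := hd2.sub hd1
    rw [heq, sub_self] at this
    exact this
  exact is_const_of_deriv_eq_zero (fun x => (key x).differentiableAt)
    (fun x => (key x).deriv) t 0
end

section
/- Let Y be a b×a real matrix, U a c×b real matrix, and Z a c×a real matrix (the weights of a linear ResNetFree block r(x; U, Y, Z) = U Y x + Z x). Let B = [Y; Z] be the (b+c)×a matrix obtained by stacking Y on top of Z, and let A = [U Z] be the c×(b+a) matrix obtained by placing U to the left of Z. Then ‖B‖₂² ≥ (1/8)‖A‖₂² − ‖UᵀU − YYᵀ‖₂. In particular, switching between the two matrix representations A and B of the block preserves the largest singular value up to a multiplicative factor of 8 and an additive constant controlled by the Gram difference UᵀU − YYᵀ. -/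
open Matrix

/-- The spectral norm (largest singular value) of a real matrix: its operator norm
as a linear map between Euclidean `ℓ²` spaces. -/
noncomputable def matrixSpectralNorm {m n : Type*} [Fintype m] [Fintype n] [DecidableEq n]
    (M : Matrix m n ℝ) : ℝ :=
  ‖LinearMap.toContinuousLinearMap (Matrix.toEuclideanLin M)‖

/-!
Write `A = [U Z]`, `B = [Y; Z]` and `E = ‖UᴴU - YYᴴ‖`. Since `AAᴴ = UUᴴ + ZZᴴ`, the C⋆-identity
and the triangle inequality give `‖A‖² ≤ ‖U‖² + ‖Z‖²`, and likewise `‖U‖² = ‖UᴴU‖ ≤ ‖YYᴴ‖ + E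
= ‖Y‖² + E`. Both `Y` and `Z` are compressions of `B`, so `‖Y‖, ‖Z‖ ≤ ‖B‖`. Altogether
`‖A‖² ≤ 2‖B‖² + E`, which is stronger than the claim.
-/

open scoped Matrix.Norms.L2Operator

lemma matrixSpectralNorm_eq_l2_opNorm {m n : Type*} [Fintype m] [Fintype n] [DecidableEq n]
    (M : Matrix m n ℝ) : matrixSpectralNorm M = ‖M‖ :=
  rfl

namespace Matrix

variable {𝕜 : Type*} [RCLike 𝕜] {l m n m₁ m₂ n₁ n₂ : Type*}
  [Fintype l] [Fintype m] [Fintype n] [Fintype m₁] [Fintype m₂] [Fintype n₁] [Fintype n₂]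
  [DecidableEq m] [DecidableEq n] [DecidableEq m₁] [DecidableEq m₂]
  [DecidableEq n₁] [DecidableEq n₂]

lemma l2_opNorm_mul_conjTranspose_self (A : Matrix m n 𝕜) : ‖A * Aᴴ‖ = ‖A‖ * ‖A‖ := by
  simpa [l2_opNorm_conjTranspose] using l2_opNorm_conjTranspose_mul_self Aᴴ

lemma l2_opNorm_one_le : ‖(1 : Matrix n n 𝕜)‖ ≤ 1 := by
  rw [cstar_norm_def, map_one]
  exact ContinuousLinearMap.norm_id_le

lemma l2_opNorm_fromCols_sq_le (A₁ : Matrix m n₁ 𝕜) (A₂ : Matrix m n₂ 𝕜) :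
    ‖fromCols A₁ A₂‖ ^ 2 ≤ ‖A₁‖ ^ 2 + ‖A₂‖ ^ 2 := by
  have hgram : fromCols A₁ A₂ * (fromCols A₁ A₂)ᴴ = A₁ * A₁ᴴ + A₂ * A₂ᴴ := by
    rw [conjTranspose_fromCols_eq_fromRows_conjTranspose, fromCols_mul_fromRows]
  simpa only [sq, ← l2_opNorm_mul_conjTranspose_self, hgram] using norm_add_le _ _

lemma l2_opNorm_fromCols_le_one {A₁ : Matrix m n₁ 𝕜} {A₂ : Matrix m n₂ 𝕜}
    (h : ‖A₁‖ ^ 2 + ‖A₂‖ ^ 2 ≤ 1) : ‖fromCols A₁ A₂‖ ≤ 1 :=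
  (sq_le_one_iff₀ (norm_nonneg _)).mp ((l2_opNorm_fromCols_sq_le A₁ A₂).trans h)

lemma l2_opNorm_le_fromRows_left (A₁ : Matrix m₁ n 𝕜) (A₂ : Matrix m₂ n 𝕜) :
    ‖A₁‖ ≤ ‖fromRows A₁ A₂‖ := by
  have hP : ‖fromCols (1 : Matrix m₁ m₁ 𝕜) (0 : Matrix m₁ m₂ 𝕜)‖ ≤ 1 :=
    l2_opNorm_fromCols_le_one <| by
      simpa using l2_opNorm_one_le (𝕜 := 𝕜) (n := m₁)
  calc ‖A₁‖ = ‖fromCols (1 : Matrix m₁ m₁ 𝕜) (0 : Matrix m₁ m₂ 𝕜) * fromRows A₁ A₂‖ := by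
        rw [fromCols_mul_fromRows, Matrix.one_mul, Matrix.zero_mul, add_zero]
    _ ≤ ‖fromRows A₁ A₂‖ := (l2_opNorm_mul _ _).trans (mul_le_of_le_one_left (norm_nonneg _) hP)

lemma l2_opNorm_le_fromRows_right (A₁ : Matrix m₁ n 𝕜) (A₂ : Matrix m₂ n 𝕜) :
    ‖A₂‖ ≤ ‖fromRows A₁ A₂‖ := by
  have hP : ‖fromCols (0 : Matrix m₂ m₁ 𝕜) (1 : Matrix m₂ m₂ 𝕜)‖ ≤ 1 :=
    l2_opNorm_fromCols_le_one <| by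
      simpa using l2_opNorm_one_le (𝕜 := 𝕜) (n := m₂)
  calc ‖A₂‖ = ‖fromCols (0 : Matrix m₂ m₁ 𝕜) (1 : Matrix m₂ m₂ 𝕜) * fromRows A₁ A₂‖ := by
        rw [fromCols_mul_fromRows, Matrix.one_mul, Matrix.zero_mul, zero_add]
    _ ≤ ‖fromRows A₁ A₂‖ := (l2_opNorm_mul _ _).trans (mul_le_of_le_one_left (norm_nonneg _) hP)

lemma l2_opNorm_sq_le_add_norm_conjTranspose_mul_self_sub (U : Matrix l n 𝕜)
    (Y : Matrix n m₁ 𝕜) :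
    ‖U‖ ^ 2 ≤ ‖Y‖ ^ 2 + ‖Uᴴ * U - Y * Yᴴ‖ := by
  rw [sq, sq, ← l2_opNorm_conjTranspose_mul_self, ← l2_opNorm_mul_conjTranspose_self]
  exact norm_le_insert' _ _

lemma l2_opNorm_fromCols_sq_le_fromRows (U : Matrix m n 𝕜) (Y : Matrix n m₁ 𝕜)
    (Z : Matrix m m₁ 𝕜) :
    ‖fromCols U Z‖ ^ 2 ≤ 2 * ‖fromRows Y Z‖ ^ 2 + ‖Uᴴ * U - Y * Yᴴ‖ := by
  have hY := pow_le_pow_left₀ (norm_nonneg _) (l2_opNorm_le_fromRows_left Y Z) 2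
  have hZ := pow_le_pow_left₀ (norm_nonneg _) (l2_opNorm_le_fromRows_right Y Z) 2
  linarith [l2_opNorm_fromCols_sq_le U Z, l2_opNorm_sq_le_add_norm_conjTranspose_mul_self_sub U Y]

end Matrix

/-- **Shuffling the layers of a linear ResNetFree block preserves the largest
singular value up to a factor 8.** With `B = [Y; Z]` (vertical stacking) and
`A = [U Z]` (horizontal concatenation), `‖B‖₂² ≥ (1/8)‖A‖₂² - ‖UᵀU - YYᵀ‖₂`. -/
theorem resnetfree_representation_spectral_norm
    (a b c : ℕ)
    (Y : Matrix (Fin b) (Fin a) ℝ)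
    (U : Matrix (Fin c) (Fin b) ℝ)
    (Z : Matrix (Fin c) (Fin a) ℝ) :
    matrixSpectralNorm (fromRows Y Z) ^ 2
      ≥ (1 / 8) * matrixSpectralNorm (fromCols U Z) ^ 2
          - matrixSpectralNorm (Uᵀ * U - Y * Yᵀ) := by
  have key := l2_opNorm_fromCols_sq_le_fromRows U Y Z
  simp only [conjTranspose_eq_transpose_of_trivial] at key
  simp only [matrixSpectralNorm_eq_l2_opNorm]
  linarith [sq_nonneg ‖fromRows Y Z‖, norm_nonneg (Uᵀ * U - Y * Yᵀ)]
end

section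
/- Let K ≥ 1, let n₀, n₁, …, n_K be positive integers with n_K = 1, and for each j ∈ {1,…,K} let W_j : ℝ → Mat_{n_j × n_{j-1}}(ℝ) be a matrix-valued curve (a chain of linear fully-connected layers ending in a scalar-output layer). Assume the adjacent-layer Gram invariance: for every j ∈ {1,…,K−1} and every t ∈ ℝ, (W_{j+1}(t))ᵀ W_{j+1}(t) − W_j(t)(W_j(t))ᵀ = (W_{j+1}(0))ᵀ W_{j+1}(0) − W_j(0)(W_j(0))ᵀ. Then there exists a constant D ≥ 0, depending only on the matrices W_1(0), …, W_K(0), such that for every t ∈ ℝ and every j ∈ {1,…,K}, ‖W_j(t)‖_F² − ‖W_j(t)‖₂² ≤ D. -/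
/-!
Write `G_j = W_{j+1}ᵀ W_{j+1} - W_j W_jᵀ`, which the Gram invariance fixes at its initial value.
Taking traces, the squared Frobenius norms of consecutive layers differ by exactly `tr G_j`;
since `‖Aᵀ A‖ = ‖A Aᵀ‖ = ‖A‖²`, the squared spectral norms grow by at most `‖G_j‖` per layer.
The last layer is a row vector, whose Frobenius and spectral norms agree, so telescoping down
from it bounds `‖W_j‖_F² - ‖W_j‖₂²` by `∑ (‖G_i‖ - tr G_i)`.
-/

open Matrix

open scoped Matrix.Norms.L2Operator

lemma Finset.sub_le_sum_Ico_of_forall_sub_le {F S c d : ℕ → ℝ} {j m : ℕ} (hjm : j ≤ m)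
    (htop : F m ≤ S m) (hF : ∀ i ∈ Finset.Ico j m, F (i + 1) - F i = d i)
    (hS : ∀ i ∈ Finset.Ico j m, S (i + 1) - S i ≤ c i) :
    F j - S j ≤ ∑ i ∈ Finset.Ico j m, (c i - d i) := by
  have hFsum : ∑ i ∈ Finset.Ico j m, d i = F m - F j := by
    rw [← Finset.sum_Ico_sub F hjm]
    exact (Finset.sum_congr rfl hF).symm
  have hSsum : S m - S j ≤ ∑ i ∈ Finset.Ico j m, c i := by
    rw [← Finset.sum_Ico_sub S hjm]
    exact Finset.sum_le_sum hS
  rw [Finset.sum_sub_distrib]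
  linarith

namespace Matrix

variable {l m n : Type*} [Fintype l] [Fintype m] [Fintype n]

lemma trace_transpose_mul_self_eq_sum_sq (A : Matrix m n ℝ) :
    trace (Aᵀ * A) = ∑ i, ∑ k, A i k ^ 2 := by
  simp only [trace, diag, mul_apply, transpose_apply, sq]
  exact Finset.sum_comm

lemma trace_mul_transpose_self_eq_sum_sq (A : Matrix m n ℝ) :
    trace (A * Aᵀ) = ∑ i, ∑ k, A i k ^ 2 := by
  simp only [trace, diag, mul_apply, transpose_apply, sq]

lemma sum_sq_sub_sum_sq_eq_trace (A : Matrix m n ℝ) (B : Matrix l m ℝ) :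
    (∑ i, ∑ k, B i k ^ 2) - ∑ i, ∑ k, A i k ^ 2 = trace (Bᵀ * B - A * Aᵀ) := by
  rw [trace_sub, trace_transpose_mul_self_eq_sum_sq, trace_mul_transpose_self_eq_sum_sq]

lemma l2_opNorm_transpose_mul_self [DecidableEq n] (A : Matrix m n ℝ) :
    ‖Aᵀ * A‖ = ‖A‖ ^ 2 := by
  rw [← conjTranspose_eq_transpose_of_trivial, l2_opNorm_conjTranspose_mul_self, sq]

lemma l2_opNorm_mul_transpose_self [DecidableEq m] [DecidableEq n] (A : Matrix m n ℝ) :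
    ‖A * Aᵀ‖ = ‖A‖ ^ 2 := by
  rw [← l2_opNorm_conjTranspose A, conjTranspose_eq_transpose_of_trivial,
    ← l2_opNorm_transpose_mul_self, transpose_transpose]

lemma norm_entry_le_l2_opNorm {𝕜 : Type*} [RCLike 𝕜] [DecidableEq n] (A : Matrix m n 𝕜)
    (i : m) (j : n) : ‖A i j‖ ≤ ‖A‖ := by
  calc ‖A i j‖ = ‖(EuclideanSpace.equiv m 𝕜).symm (A *ᵥ EuclideanSpace.single j 1) i‖ := by
        simp [mulVec_single]
    _ ≤ ‖(EuclideanSpace.equiv m 𝕜).symm (A *ᵥ EuclideanSpace.single j 1)‖ :=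
        PiLp.norm_apply_le _ _
    _ ≤ ‖A‖ * ‖EuclideanSpace.single j (1 : 𝕜)‖ := l2_opNorm_mulVec _ _
    _ = ‖A‖ := by simp

lemma sum_sq_le_l2_opNorm_sq_of_subsingleton [Subsingleton m] [DecidableEq m] [DecidableEq n]
    (A : Matrix m n ℝ) : ∑ i, ∑ k, A i k ^ 2 ≤ ‖A‖ ^ 2 := by
  cases isEmpty_or_nonempty m with
  | inl _ => simp only [Finset.univ_eq_empty, Finset.sum_empty]; positivity
  | inr hm =>
    obtain ⟨i⟩ := hm
    calc ∑ i, ∑ k, A i k ^ 2 = (A * Aᵀ) i i := by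
          rw [Fintype.sum_subsingleton _ i]; simp only [mul_apply, transpose_apply, sq]
      _ ≤ ‖(A * Aᵀ) i i‖ := Real.le_norm_self _
      _ ≤ ‖A * Aᵀ‖ := norm_entry_le_l2_opNorm _ i i
      _ = ‖A‖ ^ 2 := l2_opNorm_mul_transpose_self A

lemma l2_opNorm_sq_sub_l2_opNorm_sq_le [DecidableEq m] [DecidableEq n] (A : Matrix m n ℝ)
    (B : Matrix l m ℝ) :
    ‖B‖ ^ 2 - ‖A‖ ^ 2 ≤ ‖Bᵀ * B - A * Aᵀ‖ := by
  rw [← l2_opNorm_transpose_mul_self, ← l2_opNorm_mul_transpose_self]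
  exact norm_sub_norm_le _ _

end Matrix

theorem frobenius_spectral_gap_bounded_general
    (K : ℕ)
    (n : ℕ → ℕ) (hlast : n K = 1)
    (W : (j : ℕ) → ℝ → Matrix (Fin (n (j + 1))) (Fin (n j)) ℝ)
    (hGram : ∀ j : ℕ, j + 1 < K → ∀ t : ℝ,
      (W (j + 1) t)ᵀ * W (j + 1) t - W j t * (W j t)ᵀ
        = (W (j + 1) 0)ᵀ * W (j + 1) 0 - W j 0 * (W j 0)ᵀ) :
    ∃ D : ℝ, 0 ≤ D ∧ ∀ t : ℝ, ∀ j < K,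
      (∑ i, ∑ k, (W j t i k) ^ 2) - matrixSpectralNorm (W j t) ^ 2 ≤ D := by
  set G : (j : ℕ) → Matrix (Fin (n (j + 1))) (Fin (n (j + 1))) ℝ := fun j =>
    (W (j + 1) 0)ᵀ * W (j + 1) 0 - W j 0 * (W j 0)ᵀ
  refine ⟨∑ i ∈ Finset.range (K - 1), |‖G i‖ - trace (G i)|, by positivity, fun t j hj => ?_⟩
  obtain ⟨m, rfl⟩ : ∃ m, K = m + 1 := ⟨K - 1, by omega⟩
  have : Subsingleton (Fin (n (m + 1))) := by rw [hlast]; infer_instance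
  have hstep : ∀ i ∈ Finset.Ico j m, i + 1 < m + 1 := fun i hi =>
    Nat.succ_lt_succ (Finset.mem_Ico.mp hi).2
  have hgap := Finset.sub_le_sum_Ico_of_forall_sub_le (F := fun i => ∑ a, ∑ b, W i t a b ^ 2)
    (S := fun i => ‖W i t‖ ^ 2) (c := fun i => ‖G i‖) (d := fun i => trace (G i))
    (Nat.le_of_lt_succ hj) (sum_sq_le_l2_opNorm_sq_of_subsingleton (W m t))
    (fun i hi => by rw [sum_sq_sub_sum_sq_eq_trace, hGram i (hstep i hi)])
    (fun i hi => by
      simpa only [hGram i (hstep i hi)] using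
        l2_opNorm_sq_sub_l2_opNorm_sq_le (W i t) (W (i + 1) t))
  refine hgap.trans ((Finset.sum_le_sum fun i _ => le_abs_self _).trans ?_)
  refine Finset.sum_le_sum_of_subset_of_nonneg (fun i hi => ?_) fun i _ _ => abs_nonneg _
  simp only [Finset.mem_Ico, Finset.mem_range] at hi ⊢
  omega

/-- **Bounded gap between squared Frobenius and spectral norm along a chain of
linear layers with scalar output.** Layers `W j : ℝ → Mat_{n (j+1) × n j}(ℝ)` for
`j = 0,…,K-1` (paper layers `1,…,K`), with `n K = 1`, satisfying the adjacent-layer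
Gram invariance, have `‖W_j(t)‖_F² - ‖W_j(t)‖₂² ≤ D` for a constant `D ≥ 0`
independent of `t` and `j`. -/
theorem frobenius_spectral_gap_bounded
    (K : ℕ) (hK : 1 ≤ K)
    (n : ℕ → ℕ) (hn : ∀ j ≤ K, 0 < n j) (hlast : n K = 1)
    (W : (j : ℕ) → ℝ → Matrix (Fin (n (j + 1))) (Fin (n j)) ℝ)
    (hGram : ∀ j : ℕ, j + 1 < K → ∀ t : ℝ,
      (W (j + 1) t)ᵀ * W (j + 1) t - W j t * (W j t)ᵀ
        = (W (j + 1) 0)ᵀ * W (j + 1) 0 - W j 0 * (W j 0)ᵀ) :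
    ∃ D : ℝ, 0 ≤ D ∧ ∀ t : ℝ, ∀ j < K,
      (∑ i, ∑ k, (W j t i k) ^ 2) - matrixSpectralNorm (W j t) ^ 2 ≤ D :=
  frobenius_spectral_gap_bounded_general K n hlast W hGram
end

section
/- Let K ≥ 1, let n₀, n₁, …, n_K be positive integers with n_K = 1, and for each j ∈ {1,…,K} let W_j : ℝ → Mat_{n_j × n_{j-1}}(ℝ) be a matrix-valued curve satisfying, for every j ∈ {1,…,K−1} and every t ∈ ℝ, (W_{j+1}(t))ᵀ W_{j+1}(t) − W_j(t)(W_j(t))ᵀ = (W_{j+1}(0))ᵀ W_{j+1}(0) − W_j(0)(W_j(0))ᵀ, and assume ‖W_1(t)‖_F → ∞ as t → ∞. Then for each j ∈ {1,…,K} there exist functions u_j : ℝ → ℝ^{n_j} and v_j : ℝ → ℝ^{n_{j-1}} taking values in the respective unit spheres such that (i) ‖ W_j(t)/‖W_j(t)‖_F − u_j(t) v_j(t)ᵀ ‖_F → 0 as t → ∞ for every j (each normalized layer converges to a rank-one matrix), and (ii) |⟨v_{j+1}(t), u_j(t)⟩| → 1 as t → ∞ for every j ∈ {1,…,K−1} (adjacent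 layers align). -/
open Matrix

/-- The Frobenius norm of a real matrix. -/
noncomputable def frobeniusNorm {m n : Type*} [Fintype m] [Fintype n]
    (M : Matrix m n ℝ) : ℝ :=
  Real.sqrt (∑ i, ∑ j, (M i j) ^ 2)

attribute [local instance] Matrix.frobeniusSeminormedAddCommGroup

namespace ROA

variable {m p l : Type*} [Fintype m] [Fintype p] [Fintype l]

/-- sum of squares of entries -/
noncomputable def qm (M : Matrix m p ℝ) : ℝ := ∑ i, ∑ j, (M i j) ^ 2

noncomputable def qv (x : m → ℝ) : ℝ := ∑ i, (x i) ^ 2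

lemma qm_nonneg (M : Matrix m p ℝ) : 0 ≤ qm M :=
  Finset.sum_nonneg fun _ _ => Finset.sum_nonneg fun _ _ => sq_nonneg _

lemma qv_nonneg (x : m → ℝ) : 0 ≤ qv x := Finset.sum_nonneg fun _ _ => sq_nonneg _

lemma norm_eq_sqrt_qm (M : Matrix m p ℝ) : ‖M‖ = Real.sqrt (qm M) := by
  rw [Matrix.frobenius_norm_def, Real.sqrt_eq_rpow, qm]
  congr 1
  refine Finset.sum_congr rfl fun i _ => Finset.sum_congr rfl fun j _ => ?_
  rw [Real.norm_eq_abs, Real.rpow_two, sq_abs]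

lemma sq_norm (M : Matrix m p ℝ) : ‖M‖ ^ 2 = qm M := by
  rw [norm_eq_sqrt_qm, Real.sq_sqrt (qm_nonneg M)]

lemma qm_transpose (M : Matrix m p ℝ) : qm Mᵀ = qm M := by
  rw [qm, qm, Finset.sum_comm]
  rfl

lemma qm_smul (c : ℝ) (M : Matrix m p ℝ) : qm (c • M) = c ^ 2 * qm M := by
  simp [qm, Finset.mul_sum, mul_pow]

lemma norm_smul' (c : ℝ) (M : Matrix m p ℝ) : ‖c • M‖ = |c| * ‖M‖ := by
  rw [norm_eq_sqrt_qm, norm_eq_sqrt_qm, qm_smul, Real.sqrt_mul (sq_nonneg c),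
    Real.sqrt_sq_eq_abs]

lemma qv_pos {x : m → ℝ} (hx : x ≠ 0) : 0 < qv x := by
  obtain ⟨i, hi⟩ := Function.ne_iff.mp hx
  have hi' : x i ≠ 0 := hi
  have h1 : 0 < x i ^ 2 := by positivity
  exact h1.trans_le (Finset.single_le_sum (fun j _ => sq_nonneg (x j)) (Finset.mem_univ i))

lemma qm_vecMulVec (u : m → ℝ) (v : p → ℝ) : qm (vecMulVec u v) = qv u * qv v := by
  simp [qm, qv, Matrix.vecMulVec_apply, mul_pow, ← Finset.mul_sum, ← Finset.sum_mul]

/-- Cauchy-Schwarz bound: `qv (M *ᵥ x) ≤ qm M * qv x`. -/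
lemma qv_mulVec_le (M : Matrix m p ℝ) (x : p → ℝ) : qv (M *ᵥ x) ≤ qm M * qv x := by
  rw [qv, qm, Finset.sum_mul]
  refine Finset.sum_le_sum fun i _ => ?_
  simpa [Matrix.mulVec, dotProduct, qv] using
    Finset.sum_mul_sq_le_sq_mul_sq Finset.univ (fun j => M i j) x

/-- `⟨u, M *ᵥ v⟩ = ⟨Mᵀ *ᵥ u, v⟩`. -/
lemma dot_mulVec (M : Matrix m p ℝ) (u : m → ℝ) (v : p → ℝ) :
    ∑ i, u i * (M *ᵥ v) i = ∑ j, (Mᵀ *ᵥ u) j * v j := by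
  simp only [Matrix.mulVec, dotProduct, Matrix.transpose_apply, Finset.mul_sum,
    Finset.sum_mul]
  rw [Finset.sum_comm]
  refine Finset.sum_congr rfl fun j _ => Finset.sum_congr rfl fun i _ => by ring

lemma qm_sub_vecMulVec (M : Matrix m p ℝ) (u : m → ℝ) (v : p → ℝ) :
    qm (M - vecMulVec u v)
      = qm M - 2 * (∑ i, u i * (M *ᵥ v) i) + qv u * qv v := by
  have h : ∀ i j, (M i j - u i * v j) ^ 2
      = M i j ^ 2 - 2 * (u i * (M i j * v j)) + u i ^ 2 * v j ^ 2 := by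
    intro i j; ring
  have e1 : qv u * qv v = ∑ i, ∑ j, u i ^ 2 * v j ^ 2 := by
    rw [qv, qv, Finset.sum_mul_sum]
  have e2 : (2:ℝ) * (∑ i, u i * (M *ᵥ v) i) = ∑ i, ∑ j, 2 * (u i * (M i j * v j)) := by
    simp [Matrix.mulVec, dotProduct, Finset.mul_sum]
  simp only [qm, Matrix.sub_apply, Matrix.vecMulVec_apply, h, e1, e2,
    Finset.sum_add_distrib, Finset.sum_sub_distrib]

lemma quad_self (M : Matrix m p ℝ) (u : m → ℝ) :
    ∑ i, u i * ((M * Mᵀ) *ᵥ u) i = qv (Mᵀ *ᵥ u) := by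
  rw [← Matrix.mulVec_mulVec, dot_mulVec]
  simp [qv, sq]

lemma quad_vecMulVec (u : m → ℝ) (x : m → ℝ) :
    ∑ i, x i * ((vecMulVec u u) *ᵥ x) i = (∑ i, u i * x i) ^ 2 := by
  have h : ∀ i, (vecMulVec u u *ᵥ x) i = u i * ∑ k, u k * x k := by
    intro i
    simp [Matrix.mulVec, dotProduct, Matrix.vecMulVec_apply, Finset.mul_sum, mul_assoc]
  simp only [h]
  have h2 : ∀ i, x i * (u i * ∑ k, u k * x k) = (u i * x i) * ∑ k, u k * x k := fun i => by ring
  simp only [h2]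
  rw [← Finset.sum_mul, sq]

lemma quad_abs_le (E : Matrix m m ℝ) (x : m → ℝ) :
    |∑ i, x i * (E *ᵥ x) i| ≤ ‖E‖ * qv x := by
  have h1 : (∑ i, x i * (E *ᵥ x) i) ^ 2 ≤ qv x * qv (E *ᵥ x) :=
    Finset.sum_mul_sq_le_sq_mul_sq Finset.univ x (E *ᵥ x)
  have h2 : qv (E *ᵥ x) ≤ qm E * qv x := qv_mulVec_le E x
  have h3 : (∑ i, x i * (E *ᵥ x) i) ^ 2 ≤ qm E * qv x ^ 2 := by
    nlinarith [qv_nonneg x, qm_nonneg E, qv_nonneg (E *ᵥ x)]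
  calc |∑ i, x i * (E *ᵥ x) i| = Real.sqrt ((∑ i, x i * (E *ᵥ x) i) ^ 2) :=
        (Real.sqrt_sq_eq_abs _).symm
    _ ≤ Real.sqrt (qm E * qv x ^ 2) := Real.sqrt_le_sqrt h3
    _ = ‖E‖ * qv x := by
        rw [Real.sqrt_mul (qm_nonneg E), Real.sqrt_sq (qv_nonneg x), norm_eq_sqrt_qm]

lemma qv_mulVec_sub_one (M : Matrix m p ℝ) (u : m → ℝ) (hu : qv u = 1) :
    |qv (Mᵀ *ᵥ u) - 1| ≤ ‖M * Mᵀ - vecMulVec u u‖ := by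
  have key : qv (Mᵀ *ᵥ u) - 1 = ∑ i, u i * ((M * Mᵀ - vecMulVec u u) *ᵥ u) i := by
    have e0 : ∀ i, ((M * Mᵀ - vecMulVec u u) *ᵥ u) i
        = ((M * Mᵀ) *ᵥ u) i - ((vecMulVec u u) *ᵥ u) i := by
      intro i; rw [Matrix.sub_mulVec]; rfl
    simp only [e0, mul_sub, Finset.sum_sub_distrib, quad_self, quad_vecMulVec]
    have : ∑ i, u i * u i = qv u := by simp [qv, sq]
    rw [this, hu]; ring
  rw [key]
  exact (quad_abs_le _ u).trans (by rw [hu, mul_one])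

lemma rank_one_approx (M : Matrix m p ℝ) (u : m → ℝ) (v : p → ℝ)
    (hM : qm M = 1) (hu : qv u = 1) (hv : qv v = 1)
    (c : ℝ) (hc : 0 < c) (hvy : v = c • (Mᵀ *ᵥ u)) :
    qm (M - vecMulVec u v) ≤ 2 * ‖M * Mᵀ - vecMulVec u u‖ := by
  set ε := ‖M * Mᵀ - vecMulVec u u‖ with hε
  have hε0 : 0 ≤ ε := norm_nonneg _
  set y := Mᵀ *ᵥ u with hy
  have hqy : c ^ 2 * qv y = 1 := by
    have h := hv
    rw [hvy] at h
    simpa [qv, mul_pow, Finset.mul_sum] using h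
  set s := c * qv y with hsdef
  have hs0 : 0 ≤ s := mul_nonneg hc.le (qv_nonneg y)
  have hs2 : s ^ 2 = qv y := by
    have : s ^ 2 = (c ^ 2 * qv y) * qv y := by rw [hsdef]; ring
    rw [this, hqy, one_mul]
  have h1 : |qv y - 1| ≤ ε := qv_mulVec_sub_one M u hu
  have hdot : ∑ i, u i * (M *ᵥ v) i = s := by
    rw [dot_mulVec, hvy]
    simp only [Pi.smul_apply, smul_eq_mul]
    rw [hsdef, qv, Finset.mul_sum]
    refine Finset.sum_congr rfl fun j _ => by ring
  have hexp : qm (M - vecMulVec u v) = 2 - 2 * s := by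
    rw [qm_sub_vecMulVec, hM, hu, hv, hdot]; ring
  rw [hexp]
  rw [abs_le] at h1
  nlinarith [h1.1, h1.2, hs0, hs2]

lemma gram_diff_le (N : Matrix m p ℝ) (u : m → ℝ) (v : p → ℝ)
    (hN : qm N = 1) (hu : qv u = 1) (hv : qv v = 1) :
    ‖Nᵀ * N - vecMulVec v v‖ ≤ 2 * ‖N - vecMulVec u v‖ := by
  set P := vecMulVec u v with hPdef
  have hP : ‖P‖ = 1 := by
    rw [hPdef, norm_eq_sqrt_qm, qm_vecMulVec, hu, hv, mul_one, Real.sqrt_one]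
  have hNn : ‖N‖ = 1 := by rw [norm_eq_sqrt_qm, hN, Real.sqrt_one]
  have hPtP : Pᵀ * P = vecMulVec v v := by
    ext j j'
    simp only [hPdef, Matrix.mul_apply, Matrix.vecMulVec_apply, Matrix.transpose_apply]
    have : ∀ i, u i * v j * (u i * v j') = u i ^ 2 * (v j * v j') := fun i => by ring
    simp only [this, ← Finset.sum_mul]
    rw [show (∑ i, u i ^ 2) = qv u from rfl, hu, one_mul]
  have hid : Nᵀ * N - vecMulVec v v = Nᵀ * (N - P) + (N - P)ᵀ * P := by
    rw [← hPtP, Matrix.mul_sub, Matrix.transpose_sub, Matrix.sub_mul]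
    abel
  rw [hid]
  calc ‖Nᵀ * (N - P) + (N - P)ᵀ * P‖ ≤ ‖Nᵀ * (N - P)‖ + ‖(N - P)ᵀ * P‖ := norm_add_le _ _
    _ ≤ ‖Nᵀ‖ * ‖N - P‖ + ‖(N - P)ᵀ‖ * ‖P‖ :=
        add_le_add (Matrix.frobenius_norm_mul _ _) (Matrix.frobenius_norm_mul _ _)
    _ = 2 * ‖N - P‖ := by
        rw [Matrix.frobenius_norm_transpose, Matrix.frobenius_norm_transpose, hNn, hP]; ring

lemma trace_transpose_mul_self (M : Matrix m p ℝ) : (Mᵀ * M).trace = qm M := by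
  rw [Matrix.trace, qm, Finset.sum_comm]
  simp [Matrix.diag, Matrix.mul_apply, sq]

lemma trace_mul_transpose_self (M : Matrix m p ℝ) : (M * Mᵀ).trace = qm M := by
  rw [Matrix.trace, qm]
  simp [Matrix.diag, Matrix.mul_apply, sq]

noncomputable def nvec {k : ℕ} (x : Fin k → ℝ) : Fin k → ℝ :=
  if x = 0 then (fun i => if i.val = 0 then 1 else 0)
  else (Real.sqrt (∑ i, x i ^ 2))⁻¹ • x

lemma nvec_unit {k : ℕ} (hk : 0 < k) (x : Fin k → ℝ) : ∑ i, nvec x i ^ 2 = 1 := by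
  unfold nvec
  split_ifs with h
  · rw [Finset.sum_eq_single (⟨0, hk⟩ : Fin k)]
    · simp
    · intro b _ hb
      have hb0 : b.val ≠ 0 := fun h0 => hb (Fin.ext h0)
      simp [hb0]
    · simp
  · have hq : 0 < ∑ i, x i ^ 2 := qv_pos h
    simp only [Pi.smul_apply, smul_eq_mul, mul_pow, ← Finset.mul_sum]
    rw [inv_pow, Real.sq_sqrt hq.le, inv_mul_cancel₀ hq.ne']

lemma nvec_of_ne {k : ℕ} (x : Fin k → ℝ) (h : x ≠ 0) :
    nvec x = (Real.sqrt (∑ i, x i ^ 2))⁻¹ • x := if_neg h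

noncomputable def vAux (K : ℕ) (n : ℕ → ℕ)
    (W : (j : ℕ) → ℝ → Matrix (Fin (n (j + 1))) (Fin (n j)) ℝ)
    (j : ℕ) (t : ℝ) : Fin (n j) → ℝ :=
  if h : j + 1 < K then nvec ((W j t)ᵀ *ᵥ vAux K n W (j + 1) t)
  else nvec ((W j t)ᵀ *ᵥ fun _ => 1)
termination_by K - j
decreasing_by omega

lemma frob_eq_norm (M : Matrix m p ℝ) : frobeniusNorm M = ‖M‖ := by
  rw [frobeniusNorm, norm_eq_sqrt_qm, qm]

lemma frob_nonneg (M : Matrix m p ℝ) : 0 ≤ frobeniusNorm M := Real.sqrt_nonneg _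

end ROA





/-- **Rank-one convergence and alignment of adjacent layers.** For a chain of linear
layers `W j : ℝ → Mat_{n (j+1) × n j}(ℝ)`, `j = 0,…,K-1` (paper layers `1,…,K`), with
scalar output (`n K = 1`), satisfying the adjacent-layer Gram invariance and whose first
layer has diverging Frobenius norm, there are unit-sphere-valued curves `u j`, `v j`
such that each normalized layer converges to the rank-one matrix `u_j v_jᵀ`, and
adjacent layers align: `|⟨v_{j+1}, u_j⟩| → 1`. -/
theorem rank_one_convergence_and_alignment
    (K : ℕ) (hK : 1 ≤ K)
    (n : ℕ → ℕ) (hn : ∀ j ≤ K, 0 < n j) (hlast : n K = 1)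
    (W : (j : ℕ) → ℝ → Matrix (Fin (n (j + 1))) (Fin (n j)) ℝ)
    (hGram : ∀ j : ℕ, j + 1 < K → ∀ t : ℝ,
      (W (j + 1) t)ᵀ * W (j + 1) t - W j t * (W j t)ᵀ
        = (W (j + 1) 0)ᵀ * W (j + 1) 0 - W j 0 * (W j 0)ᵀ)
    (hdiv : Filter.Tendsto (fun t => frobeniusNorm (W 0 t)) Filter.atTop Filter.atTop) :
    ∃ (u : (j : ℕ) → ℝ → Fin (n (j + 1)) → ℝ) (v : (j : ℕ) → ℝ → Fin (n j) → ℝ),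
      (∀ j < K, ∀ t : ℝ,
        (∑ i, (u j t i) ^ 2) = 1 ∧ (∑ i, (v j t i) ^ 2) = 1) ∧
      (∀ j < K,
        Filter.Tendsto
          (fun t => frobeniusNorm
            ((frobeniusNorm (W j t))⁻¹ • W j t - vecMulVec (u j t) (v j t)))
          Filter.atTop (nhds 0)) ∧
      (∀ j : ℕ, j + 1 < K →
        Filter.Tendsto (fun t => |∑ i, v (j + 1) t i * u j t i|)
          Filter.atTop (nhds 1)) := by
  classical
  set F : ℕ → ℝ → ℝ := fun j t => frobeniusNorm (W j t) with hFdef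
  set v : (j : ℕ) → ℝ → Fin (n j) → ℝ := ROA.vAux K n W with hvdef
  set u : (j : ℕ) → ℝ → Fin (n (j + 1)) → ℝ :=
    fun j t => if j + 1 < K then ROA.vAux K n W (j + 1) t else fun _ => 1 with hudef
  -- v in terms of u
  have hveq : ∀ j t, v j t = ROA.nvec ((W j t)ᵀ *ᵥ u j t) := by
    intro j t
    rw [hvdef, hudef, ROA.vAux]
    by_cases h : j + 1 < K
    · rw [dif_pos h]
      simp only [if_pos h]
    · rw [dif_neg h]
      simp only [if_neg h]
  have hue : ∀ j, j + 1 < K → ∀ t, u j t = v (j + 1) t := by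
    intro j h t
    rw [hudef, hvdef]
    simp only [if_pos h]
  -- unit norms
  have hvunit : ∀ j, j < K → ∀ t, ∑ i, (v j t i) ^ 2 = 1 := by
    intro j hj t
    rw [hveq j t]
    exact ROA.nvec_unit (hn j hj.le) _
  have huunit : ∀ j, j < K → ∀ t, ∑ i, (u j t i) ^ 2 = 1 := by
    intro j hj t
    by_cases h : j + 1 < K
    · rw [hue j h t]; exact hvunit (j + 1) h t
    · have hjK : j + 1 = K := by omega
      have hn1 : n (j + 1) = 1 := by rw [hjK, hlast]
      rw [hudef]
      simp only [if_neg h, one_pow, Finset.sum_const, Finset.card_univ, Fintype.card_fin,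
        smul_eq_mul, mul_one, hn1]
      norm_num
  -- squared Frobenius norms
  have hFsq_qm : ∀ j t, F j t ^ 2 = ROA.qm (W j t) := by
    intro j t
    simp only [hFdef]
    rw [ROA.frob_eq_norm, ROA.sq_norm]
  have hFnonneg : ∀ j t, 0 ≤ F j t := by
    intro j t; rw [hFdef]; exact ROA.frob_nonneg _
  have hGconst : ∀ j, j + 1 < K → ∀ t,
      F (j + 1) t ^ 2 = F j t ^ 2 + (F (j + 1) 0 ^ 2 - F j 0 ^ 2) := by
    intro j hj t
    have h := congrArg Matrix.trace (hGram j hj t)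
    rw [Matrix.trace_sub, Matrix.trace_sub, ROA.trace_transpose_mul_self,
      ROA.trace_mul_transpose_self, ROA.trace_transpose_mul_self,
      ROA.trace_mul_transpose_self] at h
    rw [hFsq_qm, hFsq_qm]
    have h0 := hFsq_qm (j + 1) 0
    have h1 := hFsq_qm j 0
    linarith [h, h0, h1]
  -- divergence of all squared layer norms
  have hGtop : ∀ j, j < K → Filter.Tendsto (fun t => F j t ^ 2) Filter.atTop Filter.atTop := by
    intro j
    induction j with
    | zero =>
      intro _
      have h2 : Filter.Tendsto (fun t => F 0 t * F 0 t) Filter.atTop Filter.atTop :=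
        hdiv.atTop_mul_atTop₀ hdiv
      simpa [pow_two] using h2
    | succ j ih =>
      intro hj
      have hj' : j + 1 < K := hj
      have hbase := ih (by omega)
      have heq : (fun t => F (j + 1) t ^ 2)
          = fun t => F j t ^ 2 + (F (j + 1) 0 ^ 2 - F j 0 ^ 2) :=
        funext fun t => hGconst j hj' t
      rw [heq]
      exact Filter.tendsto_atTop_add_const_right _ _ hbase
  have hFev1 : ∀ j, j < K → ∀ᶠ t in Filter.atTop, 1 ≤ F j t := by
    intro j hj
    filter_upwards [(hGtop j hj).eventually_ge_atTop 1] with t ht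
    nlinarith [hFnonneg j t]
  have hFinv : ∀ j, j < K →
      Filter.Tendsto (fun t => (F j t ^ 2)⁻¹) Filter.atTop (nhds 0) := by
    intro j hj
    exact (hGtop j hj).inv_tendsto_atTop
  -- normalized matrices
  set Mt : (j : ℕ) → ℝ → Matrix (Fin (n (j + 1))) (Fin (n j)) ℝ :=
    fun j t => (F j t)⁻¹ • W j t with hMtdef
  have hqmM : ∀ j t, 1 ≤ F j t → ROA.qm (Mt j t) = 1 := by
    intro j t h1
    have hFpos : (0 : ℝ) < F j t := lt_of_lt_of_le one_pos h1
    simp only [hMtdef]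
    rw [ROA.qm_smul, ← hFsq_qm]
    field_simp
  set Ef : ℕ → ℝ → ℝ :=
    fun j t => ‖Mt j t * (Mt j t)ᵀ - vecMulVec (u j t) (u j t)‖ with hEfdef
  -- from gram-error to layer-error
  have hδ : ∀ j, j < K → Filter.Tendsto (Ef j) Filter.atTop (nhds 0) →
      Filter.Tendsto (fun t => ‖Mt j t - vecMulVec (u j t) (v j t)‖)
        Filter.atTop (nhds 0) := by
    intro j hj hE
    have hsq : Filter.Tendsto (fun t => Real.sqrt (2 * Ef j t)) Filter.atTop (nhds 0) := by
      have h2 : Filter.Tendsto (fun t => 2 * Ef j t) Filter.atTop (nhds (2 * 0)) :=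
        hE.const_mul 2
      rw [mul_zero] at h2
      simpa [Real.sqrt_zero] using h2.sqrt
    refine squeeze_zero' (Filter.Eventually.of_forall fun t => norm_nonneg _) ?_ hsq
    filter_upwards [hFev1 j hj, hE.eventually (gt_mem_nhds one_pos)] with t hF1 hE1
    have hFpos : (0 : ℝ) < F j t := lt_of_lt_of_le one_pos hF1
    have hqm1 : ROA.qm (Mt j t) = 1 := hqmM j t hF1
    have huu : ROA.qv (u j t) = 1 := huunit j hj t
    have hvv : ROA.qv (v j t) = 1 := hvunit j hj t
    have hMtT : (Mt j t)ᵀ *ᵥ (u j t) = (F j t)⁻¹ • ((W j t)ᵀ *ᵥ u j t) := by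
      simp only [hMtdef]
      rw [Matrix.transpose_smul, Matrix.smul_mulVec]
    have hyne : ((W j t)ᵀ *ᵥ u j t) ≠ 0 := by
      intro h0
      have hz : ROA.qv ((Mt j t)ᵀ *ᵥ u j t) = 0 := by
        rw [hMtT, h0]
        simp [ROA.qv]
      have hb := ROA.qv_mulVec_sub_one (Mt j t) (u j t) huu
      rw [hz] at hb
      simp only [zero_sub, abs_neg, abs_one] at hb
      simp only [hEfdef] at hE1
      linarith
    set y : Fin (n j) → ℝ := (W j t)ᵀ *ᵥ u j t with hy
    have hqy : 0 < ∑ i, y i ^ 2 := ROA.qv_pos hyne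
    have hveq' : v j t
        = ((Real.sqrt (∑ i, y i ^ 2))⁻¹ * F j t) • ((Mt j t)ᵀ *ᵥ u j t) := by
      rw [hveq j t, ROA.nvec_of_ne _ hyne, hMtT, smul_smul, mul_assoc,
        mul_inv_cancel₀ hFpos.ne', mul_one]
    have hc : 0 < (Real.sqrt (∑ i, y i ^ 2))⁻¹ * F j t :=
      mul_pos (inv_pos.mpr (Real.sqrt_pos.mpr hqy)) hFpos
    have happ := ROA.rank_one_approx (Mt j t) (u j t) (v j t) hqm1 huu hvv _ hc hveq'
    simp only [hEfdef]
    rw [ROA.norm_eq_sqrt_qm]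
    exact Real.sqrt_le_sqrt happ
  -- main downward induction on gram errors
  have hEtend : ∀ d j, j + 1 + d = K → Filter.Tendsto (Ef j) Filter.atTop (nhds 0) := by
    intro d
    induction d with
    | zero =>
      intro j hjK
      have hjK' : j + 1 = K := by omega
      have hjlt : j < K := by omega
      have hev : (fun _ : ℝ => (0 : ℝ)) =ᶠ[Filter.atTop] Ef j := by
        filter_upwards [hFev1 j hjlt] with t h1
        have hqm1 := hqmM j t h1
        have hn1 : n (j + 1) = 1 := by rw [hjK', hlast]
        have hsub : ∀ i i' : Fin (n (j + 1)), i = i' := by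
          intro i i'
          have hi : (i : ℕ) < n (j + 1) := i.isLt
          have hi' : (i' : ℕ) < n (j + 1) := i'.isLt
          exact Fin.ext (by omega)
        have hu1 : u j t = fun _ => 1 := by
          rw [hudef]
          simp only [if_neg (show ¬ (j + 1 < K) by omega)]
        have hzero : Mt j t * (Mt j t)ᵀ - vecMulVec (u j t) (u j t) = 0 := by
          ext i i'
          rw [show i' = i from hsub i' i]
          have hrow : ROA.qm (Mt j t) = ∑ k, Mt j t i k ^ 2 := by
            rw [ROA.qm, Finset.sum_eq_single i]
            · intro b _ hb; exact absurd (hsub b i) hb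
            · intro hmem; exact absurd (Finset.mem_univ i) hmem
          simp only [Matrix.sub_apply, Matrix.mul_apply, Matrix.vecMulVec_apply,
            Matrix.transpose_apply, Matrix.zero_apply, hu1]
          have : ∑ k, Mt j t i k * Mt j t i k = ∑ k, Mt j t i k ^ 2 :=
            Finset.sum_congr rfl fun k _ => (sq _).symm
          rw [this, ← hrow, hqm1]
          norm_num
        simp only [hEfdef]
        rw [hzero, norm_zero]
      exact Filter.Tendsto.congr' hev tendsto_const_nhds
    | succ d ih =>
      intro j hjK
      have hj1K : (j + 1) + 1 + d = K := by omega
      have hj1 : j + 1 < K := by omega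
      have hjlt : j < K := by omega
      have hEj1 := ih (j + 1) hj1K
      have hδ1 := hδ (j + 1) hj1 hEj1
      set c : ℝ := F (j + 1) 0 ^ 2 - F j 0 ^ 2 with hcdef
      set C : Matrix (Fin (n (j + 1))) (Fin (n (j + 1))) ℝ :=
        (W (j + 1) 0)ᵀ * W (j + 1) 0 - W j 0 * (W j 0)ᵀ with hCdef
      have hbound : ∀ᶠ t in Filter.atTop, Ef j t
          ≤ 2 * ‖Mt (j + 1) t - vecMulVec (u (j + 1) t) (v (j + 1) t)‖
            + (|c| + ‖C‖) * (F j t ^ 2)⁻¹ := by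
        filter_upwards [hFev1 j hjlt, hFev1 (j + 1) hj1] with t h1 h1'
        have hFpos : (0 : ℝ) < F j t := lt_of_lt_of_le one_pos h1
        have hF1pos : (0 : ℝ) < F (j + 1) t := lt_of_lt_of_le one_pos h1'
        have hW1 : W (j + 1) t = F (j + 1) t • Mt (j + 1) t := by
          simp only [hMtdef]
          rw [smul_smul, mul_inv_cancel₀ hF1pos.ne', one_smul]
        have hWWt : W j t * (W j t)ᵀ = (W (j + 1) t)ᵀ * W (j + 1) t - C := by
          rw [hCdef, ← hGram j hj1 t]
          abel
        have hu_eq : u j t = v (j + 1) t := hue j hj1 t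
        have e1 : Mt j t * (Mt j t)ᵀ = (F j t ^ 2)⁻¹ • (W j t * (W j t)ᵀ) := by
          simp only [hMtdef]
          rw [Matrix.transpose_smul, Matrix.smul_mul, Matrix.mul_smul, smul_smul, pow_two,
            mul_inv]
        have e2 : (W (j + 1) t)ᵀ * W (j + 1) t
            = (F (j + 1) t ^ 2) • ((Mt (j + 1) t)ᵀ * Mt (j + 1) t) := by
          rw [hW1, Matrix.transpose_smul, Matrix.smul_mul, Matrix.mul_smul, smul_smul, pow_two]
        have hc' : F (j + 1) t ^ 2 = F j t ^ 2 + c := by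
          rw [hcdef]; exact hGconst j hj1 t
        have hne : (F j t ^ 2) ≠ 0 := by positivity
        have hkey : Mt j t * (Mt j t)ᵀ - vecMulVec (u j t) (u j t)
            = ((Mt (j + 1) t)ᵀ * Mt (j + 1) t - vecMulVec (v (j + 1) t) (v (j + 1) t))
              + ((F j t ^ 2)⁻¹ * c) • ((Mt (j + 1) t)ᵀ * Mt (j + 1) t)
              + (-(F j t ^ 2)⁻¹) • C := by
          rw [hu_eq, e1, hWWt, e2, hc', smul_sub, smul_smul]
          have hr : (F j t ^ 2)⁻¹ * (F j t ^ 2 + c) = 1 + (F j t ^ 2)⁻¹ * c := by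
            field_simp
          rw [hr, add_smul, one_smul, neg_smul]
          abel
        have b1 : ‖(Mt (j + 1) t)ᵀ * Mt (j + 1) t
              - vecMulVec (v (j + 1) t) (v (j + 1) t)‖
            ≤ 2 * ‖Mt (j + 1) t - vecMulVec (u (j + 1) t) (v (j + 1) t)‖ :=
          ROA.gram_diff_le _ _ _ (hqmM (j + 1) t h1') (huunit (j + 1) hj1 t)
            (hvunit (j + 1) hj1 t)
        have hNN1 : ‖(Mt (j + 1) t)ᵀ * Mt (j + 1) t‖ ≤ 1 := by
          refine (Matrix.frobenius_norm_mul _ _).trans ?_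
          rw [Matrix.frobenius_norm_transpose, ROA.norm_eq_sqrt_qm, hqmM (j + 1) t h1',
            Real.sqrt_one]
          norm_num
        have b2 : ‖((F j t ^ 2)⁻¹ * c) • ((Mt (j + 1) t)ᵀ * Mt (j + 1) t)‖
            ≤ (F j t ^ 2)⁻¹ * |c| := by
          rw [ROA.norm_smul', abs_mul, abs_inv, abs_of_pos (by positivity : (0:ℝ) < F j t ^ 2)]
          calc (F j t ^ 2)⁻¹ * |c| * ‖(Mt (j + 1) t)ᵀ * Mt (j + 1) t‖
              ≤ (F j t ^ 2)⁻¹ * |c| * 1 := by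
                refine mul_le_mul_of_nonneg_left hNN1 ?_
                positivity
            _ = (F j t ^ 2)⁻¹ * |c| := by ring
        have b3 : ‖(-(F j t ^ 2)⁻¹) • C‖ = (F j t ^ 2)⁻¹ * ‖C‖ := by
          rw [ROA.norm_smul', abs_neg, abs_inv,
            abs_of_pos (by positivity : (0:ℝ) < F j t ^ 2)]
        have htri : Ef j t ≤ ‖(Mt (j + 1) t)ᵀ * Mt (j + 1) t
              - vecMulVec (v (j + 1) t) (v (j + 1) t)‖
            + ‖((F j t ^ 2)⁻¹ * c) • ((Mt (j + 1) t)ᵀ * Mt (j + 1) t)‖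
            + ‖(-(F j t ^ 2)⁻¹) • C‖ := by
          simp only [hEfdef]
          rw [hkey]
          exact norm_add₃_le
        have : (|c| + ‖C‖) * (F j t ^ 2)⁻¹ = (F j t ^ 2)⁻¹ * |c| + (F j t ^ 2)⁻¹ * ‖C‖ := by
          ring
        rw [this]
        linarith [htri, b1, b2, b3]
      have hrhs : Filter.Tendsto
          (fun t => 2 * ‖Mt (j + 1) t - vecMulVec (u (j + 1) t) (v (j + 1) t)‖
            + (|c| + ‖C‖) * (F j t ^ 2)⁻¹) Filter.atTop (nhds 0) := by
        have t1 := hδ1.const_mul (2 : ℝ)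
        have t2 := (hFinv j hjlt).const_mul (|c| + ‖C‖)
        have := t1.add t2
        simpa using this
      exact squeeze_zero' (Filter.Eventually.of_forall fun t => norm_nonneg _) hbound hrhs
  -- assemble
  refine ⟨u, v, ?_, ?_, ?_⟩
  · intro j hj t
    exact ⟨huunit j hj t, hvunit j hj t⟩
  · intro j hj
    have h := hδ j hj (hEtend (K - (j + 1)) j (by omega))
    have heq : (fun t => frobeniusNorm
          ((frobeniusNorm (W j t))⁻¹ • W j t - vecMulVec (u j t) (v j t)))
        = fun t => ‖Mt j t - vecMulVec (u j t) (v j t)‖ := by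
      funext t
      rw [ROA.frob_eq_norm]
    rw [heq]
    exact h
  · intro j hj
    have halign : ∀ t, |∑ i, v (j + 1) t i * u j t i| = 1 := by
      intro t
      rw [hue j hj t]
      have h1 := hvunit (j + 1) hj t
      have : ∑ i, v (j + 1) t i * v (j + 1) t i = ∑ i, v (j + 1) t i ^ 2 :=
        Finset.sum_congr rfl fun i _ => (sq _).symm
      rw [this, h1, abs_one]
    have : (fun t => |∑ i, v (j + 1) t i * u j t i|) = fun _ => (1 : ℝ) :=
      funext halign
    rw [this]
    exact tendsto_const_nhds
end

section
/- Fix input dimension d, hidden width m ≥ 1, a dataset x_1,…,x_n ∈ ℝ^d, y_1,…,y_n ∈ ℝ, and an everywhere differentiable loss ℓ : ℝ → ℝ. Let w_j : ℝ → ℝ^d (j = 1,…,m) and c : ℝ → ℝ^m be differentiable curves satisfying, for all t and j, w_j′(t) = −(1/n) Σ_{i=1}^n ℓ′(y_i ν(t)(x_i)) · y_i · c_j(t) · 𝟙[⟨w_j(t), x_i⟩ > 0] · x_i and c_j′(t) = −(1/n) Σ_{i=1}^n ℓ′(y_i ν(t)(x_i)) · y_i · max(0, ⟨w_j(t), x_i⟩),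 where ν(t)(x) = Σ_{j=1}^m c_j(t) · max(0, ⟨w_j(t), x⟩). Then for every hidden unit j and every t, ‖w_j(t)‖² − c_j(t)² = ‖w_j(0)‖² − c_j(0)². -/
/-- **Vertex-wise invariance for a one-hidden-layer ReLU network under gradient
flow.** Along gradient flow on the empirical risk (with the standard subgradient
choice for ReLU), for each hidden unit `j` the quantity `‖w_j‖² - c_j²` is conserved. -/
theorem relu_vertex_invariance
    (d m n : ℕ) (hm : 1 ≤ m) (hn : 1 ≤ n)
    (x : Fin n → Fin d → ℝ) (y : Fin n → ℝ)
    (ℓ : ℝ → ℝ) (hℓ : Differentiable ℝ ℓ)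
    (w : Fin m → ℝ → Fin d → ℝ) (c : ℝ → Fin m → ℝ)
    (ν : ℝ → (Fin d → ℝ) → ℝ)
    (hν : ν = fun t x' => ∑ j : Fin m, c t j * max 0 (∑ k : Fin d, w j t k * x' k))
    (hw : ∀ (j : Fin m) (t : ℝ) (k : Fin d),
      HasDerivAt (fun s => w j s k)
        (-(1 / (n : ℝ)) * ∑ i : Fin n,
          deriv ℓ (y i * ν t (x i)) * y i * c t j *
            (if 0 < ∑ k' : Fin d, w j t k' * x i k' then (1 : ℝ) else 0) * x i k) t)
    (hc : ∀ (j : Fin m) (t : ℝ),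
      HasDerivAt (fun s => c s j)
        (-(1 / (n : ℝ)) * ∑ i : Fin n,
          deriv ℓ (y i * ν t (x i)) * y i *
            max 0 (∑ k' : Fin d, w j t k' * x i k')) t) :
    ∀ (j : Fin m) (t : ℝ),
      (∑ k : Fin d, (w j t k) ^ 2) - (c t j) ^ 2
        = (∑ k : Fin d, (w j 0 k) ^ 2) - (c 0 j) ^ 2 := by
  intro j t
  set F : ℝ → ℝ := fun s => (∑ k : Fin d, (w j s k) ^ 2) - (c s j) ^ 2 with hFdef
  suffices h : ∀ s : ℝ, HasDerivAt F 0 s by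
    exact is_const_of_deriv_eq_zero (fun s => (h s).differentiableAt)
      (fun s => (h s).deriv) t 0
  intro s
  -- derivatives of the two pieces
  have hws : HasDerivAt (fun u => ∑ k : Fin d, (w j u k) ^ 2)
      (∑ k : Fin d, 2 * (w j s k) ^ 1 *
        (-(1 / (n : ℝ)) * ∑ i : Fin n,
          deriv ℓ (y i * ν s (x i)) * y i * c s j *
            (if 0 < ∑ k' : Fin d, w j s k' * x i k' then (1 : ℝ) else 0) * x i k)) s := by
    refine HasDerivAt.fun_sum fun k _ => ?_
    simpa using (hw j s k).fun_pow 2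
  have hcs : HasDerivAt (fun u => (c u j) ^ 2)
      (2 * (c s j) ^ 1 *
        (-(1 / (n : ℝ)) * ∑ i : Fin n,
          deriv ℓ (y i * ν s (x i)) * y i *
            max 0 (∑ k' : Fin d, w j s k' * x i k'))) s := by
    simpa using (hc j s).fun_pow 2
  have hD : HasDerivAt F _ s := hws.fun_sub hcs
  convert hD using 1
  -- now pure algebra: show the derivative value is 0
  simp only [pow_one]
  have key : ∀ i : Fin n,
      ∑ k : Fin d, w j s k *
        (deriv ℓ (y i * ν s (x i)) * y i * c s j *
          (if 0 < ∑ k' : Fin d, w j s k' * x i k' then (1 : ℝ) else 0) * x i k)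
      = c s j * (deriv ℓ (y i * ν s (x i)) * y i *
          max 0 (∑ k' : Fin d, w j s k' * x i k')) := by
    intro i
    by_cases hpos : 0 < ∑ k' : Fin d, w j s k' * x i k'
    · rw [if_pos hpos, max_eq_right hpos.le]
      rw [show c s j * (deriv ℓ (y i * ν s (x i)) * y i * ∑ k' : Fin d, w j s k' * x i k')
          = ∑ k' : Fin d, w j s k' * (deriv ℓ (y i * ν s (x i)) * y i * c s j * 1 * x i k')
          from by rw [Finset.mul_sum, Finset.mul_sum]; exact Finset.sum_congr rfl fun k _ => by ring]
    · rw [if_neg hpos, max_eq_left (le_of_not_gt hpos)]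
      simp
  have e1 : ∑ k : Fin d, 2 * w j s k *
        (-(1 / (n : ℝ)) * ∑ i : Fin n,
          deriv ℓ (y i * ν s (x i)) * y i * c s j *
            (if 0 < ∑ k' : Fin d, w j s k' * x i k' then (1 : ℝ) else 0) * x i k)
      = 2 * (-(1 / (n : ℝ))) * ∑ i : Fin n,
          ∑ k : Fin d, w j s k *
            (deriv ℓ (y i * ν s (x i)) * y i * c s j *
              (if 0 < ∑ k' : Fin d, w j s k' * x i k' then (1 : ℝ) else 0) * x i k) := by
    calc ∑ k : Fin d, 2 * w j s k *
          (-(1 / (n : ℝ)) * ∑ i : Fin n,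
            deriv ℓ (y i * ν s (x i)) * y i * c s j *
              (if 0 < ∑ k' : Fin d, w j s k' * x i k' then (1 : ℝ) else 0) * x i k)
        = ∑ k : Fin d, ∑ i : Fin n, 2 * (-(1 / (n : ℝ))) *
            (w j s k * (deriv ℓ (y i * ν s (x i)) * y i * c s j *
              (if 0 < ∑ k' : Fin d, w j s k' * x i k' then (1 : ℝ) else 0) * x i k)) := by
          refine Finset.sum_congr rfl fun k _ => ?_
          rw [Finset.mul_sum, Finset.mul_sum]
          exact Finset.sum_congr rfl fun i _ => by ring
      _ = ∑ i : Fin n, ∑ k : Fin d, 2 * (-(1 / (n : ℝ))) *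
            (w j s k * (deriv ℓ (y i * ν s (x i)) * y i * c s j *
              (if 0 < ∑ k' : Fin d, w j s k' * x i k' then (1 : ℝ) else 0) * x i k)) :=
          by rw [Finset.sum_comm]
      _ = 2 * (-(1 / (n : ℝ))) * ∑ i : Fin n,
            ∑ k : Fin d, w j s k *
              (deriv ℓ (y i * ν s (x i)) * y i * c s j *
                (if 0 < ∑ k' : Fin d, w j s k' * x i k' then (1 : ℝ) else 0) * x i k) := by
          rw [Finset.mul_sum]
          exact Finset.sum_congr rfl fun i _ => (Finset.mul_sum _ _ _).symm
  rw [e1, Finset.sum_congr rfl fun i _ => key i, ← Finset.mul_sum]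
  ring
end

section
/- Fix input dimension d, hidden width m ≥ 2, a dataset x_1,…,x_n ∈ ℝ^d, y_1,…,y_n ∈ ℝ, and an everywhere differentiable loss ℓ : ℝ → ℝ. Let w_j : ℝ → ℝ^d (j = 1,…,m) and c : ℝ → ℝ^m be differentiable curves satisfying, for all t and j, w_j′(t) = −(1/n) Σ_{i=1}^n ℓ′(y_i ν(t)(x_i)) · y_i · c_j(t) · 𝟙[⟨w_j(t), x_i⟩ > 0] · x_i and c_j′(t) = −(1/n) Σ_{i=1}^n ℓ′(y_i ν(t)(x_i)) · y_i · max(0, ⟨w_j(t), x_i⟩), where ν(t)(x) = Σ_{j=1}^m c_j(t) · max(0, ⟨w_j(t), x⟩). Suppose u ≠ v are two hidden-unit indices with the same activation pattern on every training example at every time: for all t and all i ∈ {1,…,n}, ⟨w_u(t), x_i⟩ > 0 if and only if ⟨w_v(t), x_i⟩ > 0. Then for every t, ⟨w_u(t), w_v(t)⟩ − c_u(t) c_v(t) = ⟨w_u(0), w_v(0)⟩ − c_u(0) c_v(0). -/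
/-- **Pairwise vertex invariance for stably co-activated hidden units.** Along
gradient flow on the empirical risk of a one-hidden-layer ReLU network, if two hidden
units `u ≠ v` have the same activation pattern on every training example at every time,
then `⟨w_u, w_v⟩ - c_u c_v` is conserved. -/
theorem relu_pairwise_vertex_invariance
    (d m n : ℕ) (hm : 2 ≤ m) (hn : 1 ≤ n)
    (x : Fin n → Fin d → ℝ) (y : Fin n → ℝ)
    (ℓ : ℝ → ℝ) (hℓ : Differentiable ℝ ℓ)
    (w : Fin m → ℝ → Fin d → ℝ) (c : ℝ → Fin m → ℝ)
    (ν : ℝ → (Fin d → ℝ) → ℝ)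
    (hν : ν = fun t x' => ∑ j : Fin m, c t j * max 0 (∑ k : Fin d, w j t k * x' k))
    (hw : ∀ (j : Fin m) (t : ℝ) (k : Fin d),
      HasDerivAt (fun s => w j s k)
        (-(1 / (n : ℝ)) * ∑ i : Fin n,
          deriv ℓ (y i * ν t (x i)) * y i * c t j *
            (if 0 < ∑ k' : Fin d, w j t k' * x i k' then (1 : ℝ) else 0) * x i k) t)
    (hc : ∀ (j : Fin m) (t : ℝ),
      HasDerivAt (fun s => c s j)
        (-(1 / (n : ℝ)) * ∑ i : Fin n,
          deriv ℓ (y i * ν t (x i)) * y i *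
            max 0 (∑ k' : Fin d, w j t k' * x i k')) t)
    (u v : Fin m) (huv : u ≠ v)
    (hpattern : ∀ (t : ℝ) (i : Fin n),
      (0 < ∑ k : Fin d, w u t k * x i k) ↔ (0 < ∑ k : Fin d, w v t k * x i k)) :
    ∀ t : ℝ,
      (∑ k : Fin d, w u t k * w v t k) - c t u * c t v
        = (∑ k : Fin d, w u 0 k * w v 0 k) - c 0 u * c 0 v := by
  have main : ∀ s : ℝ, HasDerivAt
      (fun s => (∑ k : Fin d, w u s k * w v s k) - c s u * c s v) 0 s := by
    intro s
    -- abbreviations for the derivatives of the outer weights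
    set Cu : ℝ := -(1 / (n : ℝ)) * ∑ i : Fin n,
        deriv ℓ (y i * ν s (x i)) * y i *
          max 0 (∑ k' : Fin d, w u s k' * x i k') with hCu
    set Cv : ℝ := -(1 / (n : ℝ)) * ∑ i : Fin n,
        deriv ℓ (y i * ν s (x i)) * y i *
          max 0 (∑ k' : Fin d, w v s k' * x i k') with hCv
    -- key algebraic identity
    have key : ∀ a b : Fin m,
        (∀ i : Fin n, (0 < ∑ k : Fin d, w a s k * x i k)
            ↔ (0 < ∑ k : Fin d, w b s k * x i k)) →
        ∑ k : Fin d,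
          (-(1 / (n : ℝ)) * ∑ i : Fin n,
            deriv ℓ (y i * ν s (x i)) * y i * c s a *
              (if 0 < ∑ k' : Fin d, w a s k' * x i k' then (1 : ℝ) else 0) * x i k)
            * w b s k
        = c s a * (-(1 / (n : ℝ)) * ∑ i : Fin n,
            deriv ℓ (y i * ν s (x i)) * y i *
              max 0 (∑ k' : Fin d, w b s k' * x i k')) := by
      intro a b hab
      have step1 : ∑ k : Fin d,
          (-(1 / (n : ℝ)) * ∑ i : Fin n,
            deriv ℓ (y i * ν s (x i)) * y i * c s a *
              (if 0 < ∑ k' : Fin d, w a s k' * x i k' then (1 : ℝ) else 0) * x i k)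
            * w b s k
          = ∑ i : Fin n, -(1 / (n : ℝ)) *
              (deriv ℓ (y i * ν s (x i)) * y i * c s a *
                (if 0 < ∑ k' : Fin d, w a s k' * x i k' then (1 : ℝ) else 0) *
                ∑ k : Fin d, w b s k * x i k) := by
        simp only [Finset.sum_mul, Finset.mul_sum]
        rw [Finset.sum_comm]
        exact Finset.sum_congr rfl fun i _ => Finset.sum_congr rfl fun k _ => by ring
      rw [step1, Finset.mul_sum, Finset.mul_sum]
      refine Finset.sum_congr rfl fun i _ => ?_
      by_cases h : 0 < ∑ k' : Fin d, w a s k' * x i k'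
      · have hb : 0 < ∑ k' : Fin d, w b s k' * x i k' := (hab i).mp h
        rw [if_pos h, max_eq_right hb.le]
        ring
      · have hb : ¬ 0 < ∑ k' : Fin d, w b s k' * x i k' := fun hb => h ((hab i).mpr hb)
        rw [if_neg h, max_eq_left (not_lt.mp hb)]
        ring
    have h1 : HasDerivAt (fun s => ∑ k : Fin d, w u s k * w v s k)
        (Cu * c s v + c s u * Cv) s := by
      have := HasDerivAt.sum (u := Finset.univ)
        (fun k (_ : k ∈ Finset.univ) => (hw u s k).mul (hw v s k))
      have heq : ∑ k : Fin d,
          ((-(1 / (n : ℝ)) * ∑ i : Fin n,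
              deriv ℓ (y i * ν s (x i)) * y i * c s u *
                (if 0 < ∑ k' : Fin d, w u s k' * x i k' then (1 : ℝ) else 0) * x i k)
              * w v s k
           + w u s k *
            (-(1 / (n : ℝ)) * ∑ i : Fin n,
              deriv ℓ (y i * ν s (x i)) * y i * c s v *
                (if 0 < ∑ k' : Fin d, w v s k' * x i k' then (1 : ℝ) else 0) * x i k))
          = Cu * c s v + c s u * Cv := by
        rw [Finset.sum_add_distrib]
        have e1 := key u v (fun i => hpattern s i)
        have e2 := key v u (fun i => (hpattern s i).symm)
        rw [e1]
        have e3 : ∑ k : Fin d, w u s k *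
            (-(1 / (n : ℝ)) * ∑ i : Fin n,
              deriv ℓ (y i * ν s (x i)) * y i * c s v *
                (if 0 < ∑ k' : Fin d, w v s k' * x i k' then (1 : ℝ) else 0) * x i k)
            = ∑ k : Fin d,
            (-(1 / (n : ℝ)) * ∑ i : Fin n,
              deriv ℓ (y i * ν s (x i)) * y i * c s v *
                (if 0 < ∑ k' : Fin d, w v s k' * x i k' then (1 : ℝ) else 0) * x i k)
              * w u s k :=
          Finset.sum_congr rfl fun k _ => mul_comm _ _
        rw [e3, e2, hCu, hCv]
        ring
      rw [← heq]
      rw [show (fun s => ∑ k : Fin d, w u s k * w v s k)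
          = ∑ k : Fin d, (fun s => w u s k) * (fun s => w v s k) from by
            funext r; simp [Finset.sum_apply]]
      exact this
    have h2 : HasDerivAt (fun s => c s u * c s v) (Cu * c s v + c s u * Cv) s :=
      (hc u s).mul (hc v s)
    have := h1.sub h2
    rw [sub_self] at this
    exact this
  intro t
  have hdiff : Differentiable ℝ
      (fun s => (∑ k : Fin d, w u s k * w v s k) - c s u * c s v) :=
    fun s => (main s).differentiableAt
  have hzero : ∀ s, deriv
      (fun s => (∑ k : Fin d, w u s k * w v s k) - c s u * c s v) s = 0 :=
    fun s => (main s).deriv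
  exact is_const_of_deriv_eq_zero hdiff hzero t 0
end

section
/- Fix input dimension d, hidden width m ≥ 1, a dataset x_1,…,x_n ∈ ℝ^d, y_1,…,y_n ∈ ℝ, and an everywhere differentiable loss ℓ : ℝ → ℝ. Let w_j : ℝ → ℝ^d (j = 1,…,m) and c : ℝ → ℝ^m be differentiable curves satisfying, for all t and j, w_j′(t) = −(1/n) Σ_{i=1}^n ℓ′(y_i ν(t)(x_i)) · y_i · c_j(t) · 𝟙[⟨w_j(t), x_i⟩ > 0] · x_i and c_j′(t) = −(1/n) Σ_{i=1}^n ℓ′(y_i ν(t)(x_i)) · y_i · max(0, ⟨w_j(t), x_i⟩), where ν(t)(x) = Σ_{j=1}^m c_j(t) · max(0, ⟨w_j(t), x⟩). Then for every t, Σ_{j=1}^m ‖w_j(t)‖² − Σ_{j=1}^m c_j(t)² = Σ_{j=1}^m ‖w_j(0)‖² − Σ_{j=1}^m c_j(0)²; that is, the difference of the squared layer norms between the two layers is conserved by gradient flow. -/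
/-- **Layer-wise (edge-wise) invariance for a one-hidden-layer ReLU network.** Along
gradient flow on the empirical risk, the difference of the squared Frobenius norms of
the two layers, `∑ⱼ ‖w_j‖² - ∑ⱼ c_j²`, is conserved. -/
theorem relu_layer_invariance
    (d m n : ℕ) (hm : 1 ≤ m) (hn : 1 ≤ n)
    (x : Fin n → Fin d → ℝ) (y : Fin n → ℝ)
    (ℓ : ℝ → ℝ) (hℓ : Differentiable ℝ ℓ)
    (w : Fin m → ℝ → Fin d → ℝ) (c : ℝ → Fin m → ℝ)
    (ν : ℝ → (Fin d → ℝ) → ℝ)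
    (hν : ν = fun t x' => ∑ j : Fin m, c t j * max 0 (∑ k : Fin d, w j t k * x' k))
    (hw : ∀ (j : Fin m) (t : ℝ) (k : Fin d),
      HasDerivAt (fun s => w j s k)
        (-(1 / (n : ℝ)) * ∑ i : Fin n,
          deriv ℓ (y i * ν t (x i)) * y i * c t j *
            (if 0 < ∑ k' : Fin d, w j t k' * x i k' then (1 : ℝ) else 0) * x i k) t)
    (hc : ∀ (j : Fin m) (t : ℝ),
      HasDerivAt (fun s => c s j)
        (-(1 / (n : ℝ)) * ∑ i : Fin n,
          deriv ℓ (y i * ν t (x i)) * y i *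
            max 0 (∑ k' : Fin d, w j t k' * x i k')) t) :
    ∀ t : ℝ,
      (∑ j : Fin m, ∑ k : Fin d, (w j t k) ^ 2) - (∑ j : Fin m, (c t j) ^ 2)
        = (∑ j : Fin m, ∑ k : Fin d, (w j 0 k) ^ 2) - (∑ j : Fin m, (c 0 j) ^ 2) := by
  set F : ℝ → ℝ := fun t =>
    (∑ j : Fin m, ∑ k : Fin d, (w j t k) ^ 2) - (∑ j : Fin m, (c t j) ^ 2) with hF
  have key : ∀ t : ℝ, HasDerivAt F 0 t := by
    intro t
    have hW : HasDerivAt (fun s => ∑ j : Fin m, ∑ k : Fin d, (w j s k) ^ 2)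
        (∑ j : Fin m, ∑ k : Fin d, (2 : ℕ) * (w j t k) ^ 1 *
          (-(1 / (n : ℝ)) * ∑ i : Fin n,
            deriv ℓ (y i * ν t (x i)) * y i * c t j *
              (if 0 < ∑ k' : Fin d, w j t k' * x i k' then (1 : ℝ) else 0) * x i k)) t := by
      refine HasDerivAt.fun_sum fun j _ => HasDerivAt.fun_sum fun k _ => ?_
      exact (hw j t k).pow 2
    have hC : HasDerivAt (fun s => ∑ j : Fin m, (c s j) ^ 2)
        (∑ j : Fin m, (2 : ℕ) * (c t j) ^ 1 *
          (-(1 / (n : ℝ)) * ∑ i : Fin n,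
            deriv ℓ (y i * ν t (x i)) * y i *
              max 0 (∑ k' : Fin d, w j t k' * x i k'))) t := by
      refine HasDerivAt.fun_sum fun j _ => ?_
      exact (hc j t).pow 2
    have heq : (∑ j : Fin m, ∑ k : Fin d, (2 : ℕ) * (w j t k) ^ 1 *
          (-(1 / (n : ℝ)) * ∑ i : Fin n,
            deriv ℓ (y i * ν t (x i)) * y i * c t j *
              (if 0 < ∑ k' : Fin d, w j t k' * x i k' then (1 : ℝ) else 0) * x i k))
        = (∑ j : Fin m, (2 : ℕ) * (c t j) ^ 1 *
          (-(1 / (n : ℝ)) * ∑ i : Fin n,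
            deriv ℓ (y i * ν t (x i)) * y i *
              max 0 (∑ k' : Fin d, w j t k' * x i k'))) := by
      refine Finset.sum_congr rfl fun j _ => ?_
      simp only [pow_one, Nat.cast_ofNat, Finset.mul_sum]
      rw [Finset.sum_comm]
      refine Finset.sum_congr rfl fun i _ => ?_
      have hind : (if 0 < ∑ k' : Fin d, w j t k' * x i k' then (1 : ℝ) else 0) *
          (∑ k' : Fin d, w j t k' * x i k') = max 0 (∑ k' : Fin d, w j t k' * x i k') := by
        by_cases h : 0 < ∑ k' : Fin d, w j t k' * x i k'
        · simp [h, max_eq_right h.le]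
        · simp [h, max_eq_left (not_lt.mp h)]
      have hstep : ∀ k : Fin d,
          2 * w j t k * (-(1 / (n : ℝ)) * (deriv ℓ (y i * ν t (x i)) * y i * c t j *
            (if 0 < ∑ k' : Fin d, w j t k' * x i k' then (1 : ℝ) else 0) * x i k))
          = (2 * (-(1 / (n : ℝ))) * (deriv ℓ (y i * ν t (x i)) * y i * c t j) *
            (if 0 < ∑ k' : Fin d, w j t k' * x i k' then (1 : ℝ) else 0)) *
            (w j t k * x i k) := fun k => by ring
      rw [Finset.sum_congr rfl fun k _ => hstep k, ← Finset.mul_sum, mul_assoc, hind]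
      ring
    have := hW.sub hC
    rw [heq, sub_self] at this
    exact this
  intro t
  have hdiff : Differentiable ℝ F := fun s => (key s).differentiableAt
  have hderiv : ∀ s, deriv F s = 0 := fun s => (key s).deriv
  exact is_const_of_deriv_eq_zero hdiff hderiv t 0
end

section
/- Let m, d ≥ 1, let W be an m×d real matrix, c ∈ ℝ^m, and x ∈ ℝ^d. Then Σ_{j=1}^m c_j · max(0, Σ_{i=1}^d W_{ji} x_i) = Σ_{j=1}^m sign(c_j) · max(0, Σ_{i=1}^d sign(W_{ji}) · (|W_{ji}| · |c_j| · x_i)). That is, the one-hidden-layer ReLU network equals the composition of the path enumeration function (i,j) ↦ |W_{ji}| · |c_j| · x_i with a tree network whose weights lie in {−1, 0, 1} and are fully determined by the signs of the original weights. -/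
/-!
Writing each weight as `sign w * |w|`, the magnitudes `|Wⱼᵢ|` recombine with the signs into `Wⱼᵢ`
inside each neuron, and the factor `|cⱼ| ≥ 0` can be pulled out of the ReLU by positive
homogeneity, where it recombines with `sign cⱼ` into `cⱼ`.
-/

theorem Real.sign_mul_abs (r : ℝ) : Real.sign r * |r| = r := by
  rcases lt_trichotomy r 0 with hr | rfl | hr
  · rw [Real.sign_of_neg hr, abs_of_neg hr, neg_one_mul, neg_neg]
  · rw [abs_zero, mul_zero]
  · rw [Real.sign_of_pos hr, abs_of_pos hr, one_mul]

theorem max_zero_mul_of_nonneg {a : ℝ} (ha : 0 ≤ a) (t : ℝ) : max 0 (a * t) = a * max 0 t := by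
  rw [mul_max_of_nonneg _ _ ha, mul_zero]

theorem Real.sign_mul_max_zero_abs_mul (a t : ℝ) : Real.sign a * max 0 (|a| * t) = a * max 0 t := by
  rw [max_zero_mul_of_nonneg (abs_nonneg a), ← mul_assoc, Real.sign_mul_abs]

theorem Real.sum_sign_mul_abs_mul {ι : Type*} (s : Finset ι) (w x : ι → ℝ) (b : ℝ) :
    ∑ i ∈ s, Real.sign (w i) * (|w i| * b * x i) = b * ∑ i ∈ s, w i * x i := by
  rw [Finset.mul_sum]
  refine Finset.sum_congr rfl fun i _ => ?_
  linear_combination b * x i * Real.sign_mul_abs (w i)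

theorem relu_network_path_decomposition_general
    (m d : ℕ)
    (W : Matrix (Fin m) (Fin d) ℝ) (c : Fin m → ℝ) (x : Fin d → ℝ) :
    ∑ j : Fin m, c j * max 0 (∑ i : Fin d, W j i * x i)
      = ∑ j : Fin m, Real.sign (c j) *
          max 0 (∑ i : Fin d, Real.sign (W j i) * (|W j i| * |c j| * x i)) := by
  refine Finset.sum_congr rfl fun j _ => ?_
  rw [Real.sum_sign_mul_abs_mul, Real.sign_mul_max_zero_abs_mul]

/-- **Decomposition of a one-hidden-layer ReLU network into the path enumeration
function and a sign tree network.** The network `x ↦ ∑ⱼ cⱼ max(0, ∑ᵢ Wⱼᵢ xᵢ)` equals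
the composition of the path enumeration function `(i,j) ↦ |Wⱼᵢ| · |cⱼ| · xᵢ` with a
tree network whose weights are the signs (`∈ {-1,0,1}`) of the original weights. -/
theorem relu_network_path_decomposition
    (m d : ℕ) (hm : 1 ≤ m) (hd : 1 ≤ d)
    (W : Matrix (Fin m) (Fin d) ℝ) (c : Fin m → ℝ) (x : Fin d → ℝ) :
    ∑ j : Fin m, c j * max 0 (∑ i : Fin d, W j i * x i)
      = ∑ j : Fin m, Real.sign (c j) *
          max 0 (∑ i : Fin d, Real.sign (W j i) * (|W j i| * |c j| * x i)) :=
  relu_network_path_decomposition_general m d W c x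
end

section
/- For every real number u ≥ 0, the set { t ∈ ℝ : t ≥ 0 and |t · sin t| = u } is infinite. Consequently, for the trajectory w(t) = |t · sin t| · v in ℝ^d (v ≠ 0 fixed), every value u in the range of w has an infinite preimage w⁻¹({u}), so a trajectory can cross any fixed level set (e.g. an activation boundary of a ReLU network) infinitely many times even though its direction is constant wherever it is nonzero. -/
open Real Set

lemma exists_big_level (u b : ℝ) (hu : 0 ≤ u) :
    ∃ t, b < t ∧ 0 ≤ t ∧ |t * Real.sin t| = u := by
  obtain ⟨k, hk⟩ := exists_nat_ge (max b u + 1)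
  set a : ℝ := (k : ℝ) * (2 * Real.pi) with ha
  have hpi := Real.pi_gt_three
  have hka : (k : ℝ) ≤ a := by
    have : (1 : ℝ) ≤ 2 * Real.pi := by nlinarith
    nlinarith [(Nat.cast_nonneg k : (0:ℝ) ≤ (k:ℝ))]
  have hba : b < a := by
    have := le_max_left b u
    linarith
  have hua : u ≤ a := by
    have := le_max_right b u
    linarith
  have ha0 : 0 ≤ a := by
    have := le_max_right b u
    linarith
  set c : ℝ := Real.pi / 2 + a with hc
  have hac : a ≤ c := by rw [hc]; nlinarith
  have hfa : |a * Real.sin a| = 0 := by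
    have : Real.sin a = 0 := by
      have := Real.sin_add_nat_mul_two_pi 0 k
      simpa [ha] using this
    simp [this]
  have hfc : |c * Real.sin c| = c := by
    have hs : Real.sin c = 1 := by
      have := Real.sin_add_nat_mul_two_pi (Real.pi / 2) k
      simpa [hc, ha] using this
    rw [hs, mul_one]
    exact abs_of_nonneg (by linarith)
  have hcont : ContinuousOn (fun t => |t * Real.sin t|) (Icc a c) :=
    (continuous_abs.comp (continuous_id.mul Real.continuous_sin)).continuousOn
  have hmem : u ∈ Icc (|a * Real.sin a|) (|c * Real.sin c|) := by
    rw [hfa, hfc]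
    exact ⟨hu, by linarith⟩
  obtain ⟨t, htI, htv⟩ := intermediate_value_Icc hac hcont hmem
  exact ⟨t, lt_of_lt_of_le hba htI.1, le_trans ha0 htI.1, htv⟩

/-- **Directional convergence does not imply stable activations.** Every level set
`{t ≥ 0 : |t sin t| = u}` (for `u ≥ 0`) is infinite; consequently, for the trajectory
`w(t) = |t sin t| • v` with `v ≠ 0`, every value in the range of `w` has an infinite
preimage, so the trajectory can cross any fixed level set (e.g. a ReLU activation
boundary) infinitely many times even though its direction is constant where nonzero. -/
theorem abs_mul_sin_level_sets_infinite
    (d : ℕ) (v : Fin d → ℝ) (hv : v ≠ 0) :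
    (∀ u : ℝ, 0 ≤ u → {t : ℝ | 0 ≤ t ∧ |t * Real.sin t| = u}.Infinite) ∧
    (∀ u ∈ Set.range (fun t : ℝ => |t * Real.sin t| • v),
      ((fun t : ℝ => |t * Real.sin t| • v) ⁻¹' {u}).Infinite) := by
  have key : ∀ u : ℝ, 0 ≤ u → {t : ℝ | 0 ≤ t ∧ |t * Real.sin t| = u}.Infinite := by
    intro u hu
    apply Set.infinite_of_not_bddAbove
    rintro ⟨b, hb⟩
    obtain ⟨t, hbt, ht0, htv⟩ := exists_big_level u b hu
    exact absurd (hb ⟨ht0, htv⟩) (not_le.mpr hbt)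
  refine ⟨key, ?_⟩
  rintro u ⟨s, rfl⟩
  have hsub : {t : ℝ | 0 ≤ t ∧ |t * Real.sin t| = |s * Real.sin s|} ⊆
      (fun t : ℝ => |t * Real.sin t| • v) ⁻¹' {|s * Real.sin s| • v} := by
    rintro t ⟨-, ht⟩
    simp only [Set.mem_preimage, Set.mem_singleton_iff, ht]
  exact (key _ (abs_nonneg _)).mono hsub
end
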